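/- Let 0 < λ ≤ 1 and suppose W ⊆ V is a nonempty subset equipped with the equal weights a_w = 1/|W| for all w ∈ W, such that W integrates φ_i exactly for every index i with |μ_i| ≥ λ. Then for every natural number k, #{x ∈ V : d(x,W) ≤ k} ≥ (1/2) · min(|W| · λ^{-2k}, n). -/

import Mathlib

open Finset Matrix

/-! Let `f` be the uniform probability vector on `W` and `g = Mᵏ f`. Since `M` only moves mass
along edges, `g` is supported in the `k`-neighbourhood `S` of `W`, and its total mass is its
coefficient on the constant eigenvector, which is that of `f`, namely `1`. Expanding `f` in the
eigenbasis, the design property kills every coefficient with `|μᵢ| ≥ λ` except the constant one,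
`1/√n`; the remaining ones are damped by `μᵢᵏ` with `|μᵢ| < λ`. Hence
`‖g‖² ≤ 1/n + λ²ᵏ ‖f‖² = 1/n + λ²ᵏ/|W|`, and Cauchy–Schwarz gives `1 = (∑ g)² ≤ |S| ‖g‖²`. -/

theorem dotProduct_eq_mul_sum_of_forall_eq {V R : Type*} [Fintype V]
    [NonUnitalNonAssocSemiring R] {φ : V → R} {c : R} (hφ : ∀ v, φ v = c) (h : V → R) :
    φ ⬝ᵥ h = c * ∑ v, h v := by
  simp only [dotProduct, hφ, mul_sum]

theorem sum_eq_zero_of_dotProduct_eq_zero {V R : Type*} [Fintype V]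
    [NonUnitalNonAssocSemiring R] [NoZeroDivisors R] {φ ψ : V → R} {c : R} (hc : c ≠ 0)
    (hφ : ∀ v, φ v = c) (h : φ ⬝ᵥ ψ = 0) : ∑ v, ψ v = 0 := by
  rwa [dotProduct_eq_mul_sum_of_forall_eq hφ, mul_eq_zero_iff_left hc] at h

section EigenvectorPowers

variable {ι V R : Type*} [Fintype ι] [Fintype V] [DecidableEq V] [CommSemiring R]
  {M : Matrix V V R}

theorem pow_mulVec_eq_pow_smul {v : V → R} {c : R} (h : M *ᵥ v = c • v) (k : ℕ) :
    M ^ k *ᵥ v = c ^ k • v := by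
  induction k with
  | zero => simp
  | succ k ih => rw [pow_succ, ← mulVec_mulVec, h, mulVec_smul, ih, smul_smul, ← pow_succ']

theorem pow_mulVec_sum_smul {φ : ι → V → R} {μ : ι → R} (heig : ∀ i, M *ᵥ φ i = μ i • φ i)
    (a : ι → R) (k : ℕ) : M ^ k *ᵥ ∑ i, a i • φ i = ∑ i, (μ i ^ k * a i) • φ i := by
  simp_rw [mulVec_sum, mulVec_smul, pow_mulVec_eq_pow_smul (heig _), smul_smul, mul_comm]

end EigenvectorPowers

section Orthonormal

variable {ι V R : Type*} [Fintype ι] [Fintype V] [DecidableEq ι] [CommRing R] {φ : ι → V → R}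

theorem dotProduct_sum_smul_of_orthonormal
    (horth : ∀ i j, φ i ⬝ᵥ φ j = if i = j then 1 else 0) (a : ι → R) (j : ι) :
    φ j ⬝ᵥ ∑ i, a i • φ i = a j := by
  simp [dotProduct_sum, dotProduct_smul, horth]

theorem sum_smul_dotProduct_self_of_orthonormal
    (horth : ∀ i j, φ i ⬝ᵥ φ j = if i = j then 1 else 0) (a : ι → R) :
    (∑ i, a i • φ i) ⬝ᵥ (∑ i, a i • φ i) = ∑ i, a i ^ 2 := by
  simp_rw [sum_dotProduct, smul_dotProduct, dotProduct_sum_smul_of_orthonormal horth,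
    smul_eq_mul, sq]

theorem eq_sum_dotProduct_smul_of_orthonormal (hcard : Fintype.card ι = Fintype.card V)
    (horth : ∀ i j, φ i ⬝ᵥ φ j = if i = j then 1 else 0) (f : V → R) :
    f = ∑ i, (φ i ⬝ᵥ f) • φ i := by
  classical
  set Φ : Matrix ι V R := Matrix.of φ
  have hΦ : Φ * Φᵀ = 1 := by
    ext i j
    simpa [Φ, mul_apply, one_apply, dotProduct] using horth i j
  have hΦ' : Φᵀ * Φ = 1 := (mul_eq_one_comm_of_equiv (Fintype.equivOfCardEq hcard)).mp hΦ
  calc f = (Φᵀ * Φ) *ᵥ f := by rw [hΦ', one_mulVec]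
    _ = ∑ i, (φ i ⬝ᵥ f) • φ i := by
      rw [← mulVec_mulVec, mulVec_transpose, vecMul_eq_sum]
      rfl

variable [DecidableEq V] {M : Matrix V V R} {μ : ι → R}

theorem dotProduct_pow_mulVec_of_orthonormal (hcard : Fintype.card ι = Fintype.card V)
    (horth : ∀ i j, φ i ⬝ᵥ φ j = if i = j then 1 else 0) (heig : ∀ i, M *ᵥ φ i = μ i • φ i)
    (f : V → R) (j : ι) (k : ℕ) : φ j ⬝ᵥ (M ^ k *ᵥ f) = μ j ^ k * (φ j ⬝ᵥ f) := by
  conv_lhs => rw [eq_sum_dotProduct_smul_of_orthonormal hcard horth f]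
  rw [pow_mulVec_sum_smul heig, dotProduct_sum_smul_of_orthonormal horth]

theorem sum_pow_mulVec_eq_sum_of_forall_eq [IsDomain R] (hcard : Fintype.card ι = Fintype.card V)
    (horth : ∀ i j, φ i ⬝ᵥ φ j = if i = j then 1 else 0) (heig : ∀ i, M *ᵥ φ i = μ i • φ i)
    {i₀ : ι} {c : R} (hc : c ≠ 0) (hconst : ∀ v, φ i₀ v = c) (hμ : μ i₀ = 1) (f : V → R)
    (k : ℕ) : ∑ v, (M ^ k *ᵥ f) v = ∑ v, f v := by
  have h := dotProduct_pow_mulVec_of_orthonormal hcard horth heig f i₀ k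
  rwa [hμ, one_pow, one_mul, dotProduct_eq_mul_sum_of_forall_eq hconst,
    dotProduct_eq_mul_sum_of_forall_eq hconst, mul_right_inj' hc] at h

end Orthonormal

theorem dotProduct_self_pow_mulVec_le {ι V : Type*} [Fintype ι] [Fintype V] [DecidableEq ι]
    [DecidableEq V] {M : Matrix V V ℝ} {φ : ι → V → ℝ} {μ : ι → ℝ}
    (hcard : Fintype.card ι = Fintype.card V)
    (horth : ∀ i j, φ i ⬝ᵥ φ j = if i = j then 1 else 0) (heig : ∀ i, M *ᵥ φ i = μ i • φ i)
    {f : V → ℝ} {i₀ : ι} {lam : ℝ} (hvanish : ∀ i ≠ i₀, lam ≤ |μ i| → φ i ⬝ᵥ f = 0) (k : ℕ) :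
    (M ^ k *ᵥ f) ⬝ᵥ (M ^ k *ᵥ f) ≤ (μ i₀ ^ k * (φ i₀ ⬝ᵥ f)) ^ 2 + lam ^ (2 * k) * (f ⬝ᵥ f) := by
  set c : ι → ℝ := fun i => φ i ⬝ᵥ f
  have hf : f = ∑ i, c i • φ i := eq_sum_dotProduct_smul_of_orthonormal hcard horth f
  have hterm : ∀ i ∈ univ.erase i₀, (μ i ^ k * c i) ^ 2 ≤ lam ^ (2 * k) * c i ^ 2 := by
    intro i hi
    by_cases hlam : lam ≤ |μ i|
    · simp [c, hvanish i (ne_of_mem_erase hi) hlam]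
    · have hpow : (μ i ^ k) ^ 2 ≤ lam ^ (2 * k) := by
        rw [← pow_mul, mul_comm, ← (even_two_mul k).pow_abs]
        exact pow_le_pow_left₀ (abs_nonneg _) (not_le.mp hlam).le _
      rw [mul_pow]
      exact mul_le_mul_of_nonneg_right hpow (sq_nonneg _)
  calc (M ^ k *ᵥ f) ⬝ᵥ (M ^ k *ᵥ f)
      = (μ i₀ ^ k * c i₀) ^ 2 + ∑ i ∈ univ.erase i₀, (μ i ^ k * c i) ^ 2 := by
        rw [hf, pow_mulVec_sum_smul heig, sum_smul_dotProduct_self_of_orthonormal horth,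
          ← add_sum_erase _ _ (mem_univ i₀)]
    _ ≤ (μ i₀ ^ k * c i₀) ^ 2 + ∑ i, lam ^ (2 * k) * c i ^ 2 := by
        gcongr
        exact (sum_le_sum hterm).trans (sum_le_sum_of_subset_of_nonneg (erase_subset _ _)
          fun i _ _ => mul_nonneg ((even_two_mul k).pow_nonneg lam) (sq_nonneg _))
    _ = (μ i₀ ^ k * c i₀) ^ 2 + lam ^ (2 * k) * (f ⬝ᵥ f) := by
        rw [← mul_sum, ← sum_smul_dotProduct_self_of_orthonormal horth, ← hf]

theorem exists_edist_le_of_pow_mulVec_ne_zero {V R : Type*} [Fintype V] [DecidableEq V]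
    [Semiring R] {G : SimpleGraph V} {M : Matrix V V R} (hM : ∀ u v, M u v ≠ 0 → G.Adj u v)
    (f : V → R) (k : ℕ) {u : V} (hu : (M ^ k *ᵥ f) u ≠ 0) :
    ∃ w, f w ≠ 0 ∧ G.edist u w ≤ k := by
  induction k generalizing u with
  | zero => exact ⟨u, by simpa using hu, by simp⟩
  | succ k ih =>
    rw [pow_succ', ← mulVec_mulVec] at hu
    obtain ⟨v, -, hv⟩ := exists_ne_zero_of_sum_ne_zero hu
    obtain ⟨w, hw, hvw⟩ := ih (right_ne_zero_of_mul hv)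
    refine ⟨w, hw, ?_⟩
    calc G.edist u w ≤ G.edist u v + G.edist v w := SimpleGraph.edist_triangle
      _ ≤ 1 + k := by
        rw [SimpleGraph.edist_eq_one_iff_adj.mpr (hM u v (left_ne_zero_of_mul hv))]
        gcongr
      _ = (k + 1 : ℕ) := by push_cast; exact add_comm _ _

theorem sq_sum_le_card_mul_dotProduct_self {V : Type*} [Fintype V] {g : V → ℝ} {S : Finset V}
    (hS : ∀ u, g u ≠ 0 → u ∈ S) : (∑ u, g u) ^ 2 ≤ #S * (g ⬝ᵥ g) := by
  have hsum : ∑ u ∈ S, g u = ∑ u, g u :=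
    sum_subset (subset_univ S) fun u _ hu => not_not.mp (mt (hS u) hu)
  calc (∑ u, g u) ^ 2 ≤ #S * ∑ u ∈ S, g u ^ 2 := hsum ▸ sq_sum_le_card_mul_sum_sq
    _ ≤ #S * (g ⬝ᵥ g) := by
      gcongr
      simpa only [dotProduct, sq] using
        sum_le_sum_of_subset_of_nonneg (subset_univ S) fun u _ _ => mul_self_nonneg (g u)

section UniformWeight

variable {V : Type*} [Fintype V] [DecidableEq V] (W : Finset V)

noncomputable def uniformWeight : V → ℝ := fun v => if v ∈ W then (#W : ℝ)⁻¹ else 0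

theorem dotProduct_uniformWeight (h : V → ℝ) :
    h ⬝ᵥ uniformWeight W = ∑ w ∈ W, (#W : ℝ)⁻¹ * h w := by
  simp [dotProduct, uniformWeight, mul_comm]

variable {W}

theorem sum_uniformWeight (hW : W.Nonempty) : ∑ v, uniformWeight W v = 1 := by
  have hcard : (#W : ℝ) ≠ 0 := by exact_mod_cast hW.card_pos.ne'
  simpa [one_dotProduct, hcard] using dotProduct_uniformWeight W 1

theorem uniformWeight_dotProduct_self : uniformWeight W ⬝ᵥ uniformWeight W = (#W : ℝ)⁻¹ := by
  rw [dotProduct_uniformWeight, sum_congr rfl fun w hw => by rw [uniformWeight, if_pos hw],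
    sum_const, nsmul_eq_mul]
  by_cases hW : (#W : ℝ) = 0
  · simp [hW]
  · exact mul_inv_cancel_left₀ hW _

theorem exists_mem_dist_le_of_pow_mulVec_uniformWeight_ne_zero {G : SimpleGraph V}
    {M : Matrix V V ℝ} (hM : ∀ u v, M u v ≠ 0 → G.Adj u v) (k : ℕ) {u : V}
    (hu : (M ^ k *ᵥ uniformWeight W) u ≠ 0) : ∃ w ∈ W, G.dist u w ≤ k := by
  obtain ⟨w, hw, hdist⟩ := exists_edist_le_of_pow_mulVec_ne_zero hM _ k hu
  exact ⟨w, of_not_not fun hwW => hw (if_neg hwW), ENat.toNat_le_of_le_natCast hdist⟩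

end UniformWeight

theorem half_min_le_of_one_le_mul {s n m t : ℝ} (hn : 0 < n) (hm : 0 ≤ m) (ht : 0 ≤ t)
    (h : 1 ≤ s * (n⁻¹ + t * m⁻¹)) : 1 / 2 * min (m * t⁻¹) n ≤ s := by
  set x := min (m * t⁻¹) n
  have hx₁ : x * n⁻¹ ≤ 1 :=
    calc x * n⁻¹ ≤ n * n⁻¹ := by gcongr; exact min_le_right _ _
      _ = 1 := mul_inv_cancel₀ hn.ne'
  have hx₂ : x * (t * m⁻¹) ≤ 1 :=
    calc x * (t * m⁻¹) ≤ m * t⁻¹ * (t * m⁻¹) := by gcongr; exact min_le_left _ _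
      _ = (m * m⁻¹) * (t * t⁻¹) := by ring
      _ ≤ 1 := mul_le_one₀ mul_inv_le_one (by positivity) mul_inv_le_one
  have hB : 0 < n⁻¹ + t * m⁻¹ := by positivity
  refine le_of_mul_le_mul_right ?_ hB
  linarith

theorem graphical_design_neighborhood_growth_equal_weights_general
    {V : Type*} [Fintype V] [DecidableEq V]
    (G : SimpleGraph V) [DecidableRel G.Adj]
    (n : ℕ) (hn : Fintype.card V = n) (hn1 : 0 < n)
    (M : Matrix V V ℝ)
    (hM : ∀ u v : V, M u v = if G.Adj u v then ((G.degree v : ℝ))⁻¹ else 0)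
    (φ : Fin n → V → ℝ) (μ : Fin n → ℝ)
    (horth : ∀ i j : Fin n, ∑ v : V, φ i v * φ j v = if i = j then 1 else 0)
    (heig : ∀ i : Fin n, M.mulVec (φ i) = μ i • φ i)
    (hφ0 : ∀ v : V, φ ⟨0, hn1⟩ v = (Real.sqrt n)⁻¹)
    (hμ0 : μ ⟨0, hn1⟩ = 1)
    (lam : ℝ)
    (W : Finset V) (hW : W.Nonempty)
    (hint : ∀ i : Fin n, lam ≤ |μ i| →
      ∑ w ∈ W, ((W.card : ℝ))⁻¹ * φ i w = (1 / (n : ℝ)) * ∑ v : V, φ i v) :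
    ∀ k : ℕ,
      (({x : V | ∃ w ∈ W, G.dist x w ≤ k}.ncard : ℝ)) ≥
        (1 / 2) * min ((W.card : ℝ) * (lam ^ (2 * k))⁻¹) (n : ℝ) := by
  intro k
  set i₀ : Fin n := ⟨0, hn1⟩
  set f := uniformWeight W
  set S := univ.filter fun x => ∃ w ∈ W, G.dist x w ≤ k
  have hcard : Fintype.card (Fin n) = Fintype.card V := by rw [Fintype.card_fin, hn]
  have hinv_sqrt : (√n : ℝ)⁻¹ ≠ 0 := by positivity
  have hvanish : ∀ i ≠ i₀, lam ≤ |μ i| → φ i ⬝ᵥ f = 0 := fun i hi hμ => by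
    rw [dotProduct_uniformWeight, hint i hμ,
      sum_eq_zero_of_dotProduct_eq_zero hinv_sqrt hφ0 ((horth i₀ i).trans (if_neg hi.symm)), mul_zero]
  have hM' (u v : V) (h : M u v ≠ 0) : G.Adj u v :=
    of_not_not fun hadj => h (by rw [hM, if_neg hadj])
  have hsupp (u : V) (hu : (M ^ k *ᵥ f) u ≠ 0) : u ∈ S :=
    mem_filter.mpr ⟨mem_univ u, exists_mem_dist_le_of_pow_mulVec_uniformWeight_ne_zero hM' k hu⟩
  have hmass : ∑ u, (M ^ k *ᵥ f) u = 1 := by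
    rw [sum_pow_mulVec_eq_sum_of_forall_eq hcard horth heig hinv_sqrt hφ0 hμ0, sum_uniformWeight hW]
  have henergy := dotProduct_self_pow_mulVec_le hcard horth heig hvanish k
  rw [hμ0, one_pow, one_mul, dotProduct_eq_mul_sum_of_forall_eq hφ0, sum_uniformWeight hW,
    uniformWeight_dotProduct_self, mul_one, inv_pow, Real.sq_sqrt n.cast_nonneg] at henergy
  have hS : {x : V | ∃ w ∈ W, G.dist x w ≤ k}.ncard = #S := by
    rw [← Set.ncard_coe_finset, coe_filter]
    simp only [mem_univ, true_and]
  rw [hS, ge_iff_le]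
  refine half_min_le_of_one_le_mul (by exact_mod_cast hn1) (#W).cast_nonneg
    ((even_two_mul k).pow_nonneg lam) ?_
  calc (1 : ℝ) = (∑ u, (M ^ k *ᵥ f) u) ^ 2 := by rw [hmass, one_pow]
    _ ≤ #S * ((M ^ k *ᵥ f) ⬝ᵥ (M ^ k *ᵥ f)) := sq_sum_le_card_mul_dotProduct_self hsupp
    _ ≤ #S * ((n : ℝ)⁻¹ + lam ^ (2 * k) * (#W : ℝ)⁻¹) := by gcongr

/-- Same setting as Statement 0, but with the equal weights `a_w = 1/|W|`:
if `W` integrates `φ_i` exactly for every `i` with `|μ_i| ≥ λ`, then for every `k`,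
`#{x : d(x,W) ≤ k} ≥ (1/2) · min(|W|·λ^{-2k}, n)`. -/
theorem graphical_design_neighborhood_growth_equal_weights
    {V : Type*} [Fintype V] [DecidableEq V]
    (G : SimpleGraph V) [DecidableRel G.Adj]
    (hconn : G.Connected)
    (n : ℕ) (hn : Fintype.card V = n) (hn1 : 0 < n)
    (hdeg : ∀ v : V, 0 < G.degree v)
    (M : Matrix V V ℝ)
    (hM : ∀ u v : V, M u v = if G.Adj u v then ((G.degree v : ℝ))⁻¹ else 0)
    (φ : Fin n → V → ℝ) (μ : Fin n → ℝ)
    (horth : ∀ i j : Fin n, ∑ v : V, φ i v * φ j v = if i = j then 1 else 0)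
    (heig : ∀ i : Fin n, M.mulVec (φ i) = μ i • φ i)
    (hφ0 : ∀ v : V, φ ⟨0, hn1⟩ v = (Real.sqrt n)⁻¹)
    (hμ0 : μ ⟨0, hn1⟩ = 1)
    (lam : ℝ) (hlam : 0 < lam) (hlam1 : lam ≤ 1)
    (W : Finset V) (hW : W.Nonempty)
    (hint : ∀ i : Fin n, lam ≤ |μ i| →
      ∑ w ∈ W, ((W.card : ℝ))⁻¹ * φ i w = (1 / (n : ℝ)) * ∑ v : V, φ i v) :
    ∀ k : ℕ,
      (({x : V | ∃ w ∈ W, G.dist x w ≤ k}.ncard : ℝ)) ≥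
        (1 / 2) * min ((W.card : ℝ) * (lam ^ (2 * k))⁻¹) (n : ℝ) :=
  graphical_design_neighborhood_growth_equal_weights_general G n hn hn1 M hM φ μ horth heig hφ0 hμ0
    lam W hW hint
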